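/- arXiv:2310.14219 — 4 statements merged into one kernel-verified Lean document; each statement's English description precedes it below -/
import Mathlib

section
/- For every integer d ≥ 3 and every admissible vector b, the code C_d(b) has minimum Hamming distance at least d; that is, any two distinct codewords of C_d(b) differ in at least d coordinates. -/
/-!
If two codewords differ in fewer than `d` positions, the difference of their plain sums is at
most `(d - 1)(q - 1)` in absolute value, so the check `t₀` modulo `(d - 1)(q - 1) + 1` forces the
plain sums to agree. Hence the difference vector, read in `ZMod ℓ`, has vanishing power sums
`∑ i^j c_i` for all `j < d - 1`, while it is supported on at most `d - 1` positions. The nodes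
`1, …, n` are distinct modulo `ℓ ≥ n`, so the Vandermonde matrix on the support is invertible and
the difference is zero; since `q ≤ ℓ`, the codewords coincide.
-/

open Finset Matrix

theorem abs_sum_sub_sum_le_hammingDist_nsmul {ι G : Type*} [Fintype ι] [AddCommGroup G]
    [LinearOrder G] [IsOrderedAddMonoid G] {f g : ι → G} {B : G}
    (hB : ∀ i, |g i - f i| ≤ B) :
    |∑ i, g i - ∑ i, f i| ≤ hammingDist f g • B := by
  rw [← sum_sub_distrib, ← sum_filter_of_ne (p := fun i => f i ≠ g i)
    (fun i _ h => fun hfg => h (by rw [hfg, sub_self]))]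
  exact (abs_sum_le_sum_abs _ _).trans (sum_le_card_nsmul _ _ _ fun i _ => hB i)

theorem sum_val_eq_of_hammingDist_mul_lt_of_modEq {ι : Type*} [Fintype ι] {q M : ℕ}
    {α β : ι → Fin q} (hM : hammingDist α β * (q - 1) < M)
    (h : ∑ i, (α i : ℕ) ≡ ∑ i, (β i : ℕ) [MOD M]) :
    ∑ i, (α i : ℕ) = ∑ i, (β i : ℕ) := by
  refine h.eq_of_abs_lt ?_
  have hB : ∀ i, |((β i : ℕ) : ℤ) - (α i : ℕ)| ≤ ((q - 1 : ℕ) : ℤ) := fun i => by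
    have := (α i).isLt; have := (β i).isLt; rw [abs_le]; omega
  have hdist : hammingDist (fun i => ((α i : ℕ) : ℤ)) (fun i => ((β i : ℕ) : ℤ)) ≤
      hammingDist α β :=
    hammingDist_comp_le_hammingDist fun _ (a : Fin q) => ((a : ℕ) : ℤ)
  push_cast
  calc _ ≤ _ := abs_sum_sub_sum_le_hammingDist_nsmul hB
    _ ≤ ((hammingDist α β * (q - 1) : ℕ) : ℤ) := by
      rw [nsmul_eq_mul, Nat.cast_mul]; gcongr
    _ < M := by exact_mod_cast hM

theorem eq_zero_of_forall_sum_pow_mul_eq_zero {ι R : Type*} [Fintype ι] [CommRing R] [IsDomain R]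
    [DecidableEq R] {x c : ι → R} (hx : Function.Injective x) {m : ℕ} (hc : hammingNorm c ≤ m)
    (h : ∀ j < m, ∑ i, x i ^ j * c i = 0) : c = 0 := by
  set S : Finset ι := {i | c i ≠ 0}
  let e : Fin #S ≃ S := S.equivFin.symm
  have hv : (fun k => c (e k)) ᵥ* vandermonde (fun k => x (e k)) = 0 := by
    funext j
    have hj : (j : ℕ) < m := j.isLt.trans_le hc
    change ∑ k, c (e k) * x (e k) ^ (j : ℕ) = 0
    rw [e.sum_comp (fun i : S => c i * x i ^ (j : ℕ)),
      sum_coe_sort S (fun i => c i * x i ^ (j : ℕ))]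
    exact (sum_filter_of_ne fun i _ hi => left_ne_zero_of_mul hi).trans
      (by simpa only [mul_comm] using h j hj)
  have hv0 := eq_zero_of_vecMul_eq_zero (det_vandermonde_ne_zero_iff.mpr
    (hx.comp (Subtype.val_injective.comp e.injective))) hv
  funext i
  by_contra hi
  have := congrFun hv0 (e.symm ⟨i, by simpa [S] using hi⟩)
  exact hi (by simpa using this)

theorem ZMod.natCast_inj_of_lt {ℓ a b : ℕ} (ha : a < ℓ) (hb : b < ℓ)
    (h : (a : ZMod ℓ) = b) : a = b := by
  rw [← ZMod.val_cast_of_lt ha, ← ZMod.val_cast_of_lt hb, h]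

/-- The code `C_d(b)` (defined by the check-sums
`t_j(x) = ∑_{i=1}^n i^j x_i`, with `t_0 ≡ b_0 mod (d−1)(q−1)+1` and
`t_j ≡ b_j mod ℓ` for `1 ≤ j ≤ d−2`) has minimum Hamming distance at least `d`. -/
theorem stmt_5 (q n d ℓ : ℕ) (hd : 3 ≤ d)
    (hℓ : ℓ.Prime) (hℓq : q ≤ ℓ) (hℓn : n ≤ ℓ)
    (b : Fin (d - 1) → ℕ) :
    ∀ α β : Fin n → Fin q,
      ((∑ i : Fin n, ((i : ℕ) + 1) ^ (0 : ℕ) * (α i : ℕ)) ≡ b ⟨0, by omega⟩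
          [MOD (d - 1) * (q - 1) + 1]) →
      (∀ j : Fin (d - 1), 1 ≤ (j : ℕ) →
        (∑ i : Fin n, ((i : ℕ) + 1) ^ (j : ℕ) * (α i : ℕ)) ≡ b j [MOD ℓ]) →
      ((∑ i : Fin n, ((i : ℕ) + 1) ^ (0 : ℕ) * (β i : ℕ)) ≡ b ⟨0, by omega⟩
          [MOD (d - 1) * (q - 1) + 1]) →
      (∀ j : Fin (d - 1), 1 ≤ (j : ℕ) →
        (∑ i : Fin n, ((i : ℕ) + 1) ^ (j : ℕ) * (β i : ℕ)) ≡ b j [MOD ℓ]) →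
      α ≠ β → d ≤ hammingDist α β := by
  intro α β hα₀ hα hβ₀ hβ hne
  by_contra! hdist
  have := Fact.mk hℓ
  have hsum₀ : ∑ i, (α i : ℕ) = ∑ i, (β i : ℕ) :=
    sum_val_eq_of_hammingDist_mul_lt_of_modEq (M := (d - 1) * (q - 1) + 1)
      (Nat.lt_succ_of_le (Nat.mul_le_mul_right _ (by omega)))
      (by simpa using hα₀.trans hβ₀.symm)
  have hmod : ∀ j < d - 1,
      ∑ i : Fin n, ((i : ℕ) + 1) ^ j * (α i : ℕ) ≡
        ∑ i : Fin n, ((i : ℕ) + 1) ^ j * (β i : ℕ) [MOD ℓ] := by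
    intro j hj
    rcases j.eq_zero_or_pos with rfl | hj₀
    · simp [hsum₀, Nat.ModEq.refl]
    · exact (hα ⟨j, hj⟩ hj₀).trans (hβ ⟨j, hj⟩ hj₀).symm
  let αℓ : Fin n → ZMod ℓ := fun i => (α i : ℕ)
  let βℓ : Fin n → ZMod ℓ := fun i => (β i : ℕ)
  have hc : -αℓ + βℓ = 0 := by
    refine eq_zero_of_forall_sum_pow_mul_eq_zero (x := fun i : Fin n => ((i : ℕ) : ZMod ℓ) + 1)
      (m := d - 1) ?_ ?_ ?_
    · intro i i' h
      exact Fin.ext (ZMod.natCast_inj_of_lt (i.isLt.trans_le hℓn) (i'.isLt.trans_le hℓn)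
        (add_right_cancel h))
    · rw [← hammingDist_eq_hammingNorm]
      exact (hammingDist_comp_le_hammingDist fun _ (k : Fin q) => ((k : ℕ) : ZMod ℓ)).trans
        (by omega)
    · intro j hj
      have := (ZMod.natCast_eq_natCast_iff _ _ _).mpr (hmod j hj)
      push_cast at this
      simp [αℓ, βℓ, mul_add, sum_add_distrib, this]
  obtain ⟨i, hi⟩ := Function.ne_iff.mp hne
  exact hi (Fin.ext (ZMod.natCast_inj_of_lt ((α i).isLt.trans_le hℓq) ((β i).isLt.trans_le hℓq)
    (neg_add_eq_zero.mp (congrFun hc i))))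
end

section
/- Let q ≥ 2, n ≥ 1, d ≥ 3 be integers with d − 1 ≤ n, and let ℓ be any prime with ℓ ≥ max{q, n}. Then there exists a code C ⊆ {0, 1, …, q−1}^n with minimum Hamming distance at least d such that ((d−1)(q−1)+1) · ℓ^{d−2} · |C| ≥ q^n; in particular, A_q(n, d) ≥ q^n / (((d−1)(q−1)+1) · ℓ^{d−2}). -/
/-!
Partition `[q]^n` by the syndrome `x ↦ (∑ xᵢ mod m, (∑ xᵢ iʲ mod ℓ)_{1 ≤ j ≤ d-2})`, where
`m = (d-1)(q-1)+1`; there are `m ℓ^{d-2}` syndromes, so by pigeonhole some fibre has at least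
`q^n / (m ℓ^{d-2})` words. Two distinct words `x, y` of one fibre differ in fewer than `d`
places only if `z = x - y` is short: then `|∑ zᵢ| ≤ (d-1)(q-1) < m` forces `∑ zᵢ = 0` in `ℤ`,
so `z mod ℓ` is orthogonal to the powers `iʲ`, `0 ≤ j ≤ d-2`, of the distinct points
`i mod ℓ` (`n ≤ ℓ`). A Vandermonde argument kills `z mod ℓ`, and `|zᵢ| < q ≤ ℓ` then kills `z`.
-/

open Finset Function

theorem Fintype.exists_card_le_card_mul_card_fiber {α β : Type*} [Fintype α] [Fintype β]
    [Nonempty β] [DecidableEq β] (f : α → β) :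
    ∃ y : β, Fintype.card α ≤ Fintype.card β * #{x | f x = y} := by
  have hβ : (Fintype.card β : ℚ) ≠ 0 := by exact_mod_cast Fintype.card_ne_zero
  obtain ⟨y, hy⟩ := Fintype.exists_le_card_fiber_of_nsmul_le_card f
    (b := (Fintype.card α : ℚ) / Fintype.card β) (by rw [nsmul_eq_mul, mul_div_cancel₀ _ hβ])
  refine ⟨y, ?_⟩
  rw [div_le_iff₀ (by positivity)] at hy
  exact_mod_cast (by linarith : (Fintype.card α : ℚ) ≤ Fintype.card β * #{x | f x = y})

theorem eq_zero_of_card_support_le_of_sum_mul_pow_eq_zero {ι R : Type*} [Fintype ι]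
    [CommRing R] [IsDomain R] [DecidableEq R] {a : ι → R} (ha : Injective a) {c : ι → R}
    {k : ℕ} (hc : #{i | c i ≠ 0} ≤ k) (h : ∀ j < k, ∑ i, c i * a i ^ j = 0) : c = 0 := by
  set s : Finset ι := {i | c i ≠ 0}
  have hv : (fun t => c (s.equivFin.symm t)) = 0 := by
    refine Matrix.eq_zero_of_forall_pow_sum_mul_pow_eq_zero
      (f := fun t => a (s.equivFin.symm t)) (ha.comp (Subtype.val_injective.comp
        s.equivFin.symm.injective)) fun j => ?_
    rw [← h j (by omega), Fintype.sum_equiv s.equivFin.symm _ (fun i : s => c i * a i ^ (j : ℕ))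
      (fun _ => rfl), Finset.sum_coe_sort s (fun i => c i * a i ^ (j : ℕ))]
    exact Finset.sum_filter_of_ne fun i _ hi => left_ne_zero_of_mul hi
  funext i
  by_contra hi
  have his : i ∈ s := Finset.mem_filter.mpr ⟨Finset.mem_univ i, hi⟩
  exact hi (by simpa using congrFun hv (s.equivFin ⟨i, his⟩))

theorem abs_sum_sub_le_hammingDist_mul {ι : Type*} [Fintype ι] {q : ℕ} (x y : ι → Fin q) :
    |∑ i, (((x i : ℕ) : ℤ) - (y i : ℕ))| ≤ hammingDist x y * ((q : ℤ) - 1) := by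
  have hentry : ∀ i, |((x i : ℕ) : ℤ) - (y i : ℕ)| ≤ (q : ℤ) - 1 := fun i => by
    have := (x i).isLt
    have := (y i).isLt
    rw [abs_le]
    omega
  calc |∑ i, (((x i : ℕ) : ℤ) - (y i : ℕ))|
      ≤ ∑ i, |((x i : ℕ) : ℤ) - (y i : ℕ)| := Finset.abs_sum_le_sum_abs _ _
    _ = ∑ i with x i ≠ y i, |((x i : ℕ) : ℤ) - (y i : ℕ)| :=
        (Finset.sum_filter_of_ne (p := fun i => x i ≠ y i)
          fun i _ hi hxy => hi (by simp [hxy])).symm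
    _ ≤ #{i | x i ≠ y i} • ((q : ℤ) - 1) := Finset.sum_le_card_nsmul _ _ _ fun i _ => hentry i
    _ = hammingDist x y * ((q : ℤ) - 1) := nsmul_eq_mul _ _

theorem Fin.injective_natCast_zmod {n ℓ : ℕ} (h : n ≤ ℓ) :
    Injective fun i : Fin n => ((i : ℕ) : ZMod ℓ) := by
  intro i j hij
  have := congrArg ZMod.val hij
  rwa [ZMod.val_cast_of_lt (by omega), ZMod.val_cast_of_lt (by omega), Fin.val_inj] at this

theorem card_le_sSup_card_of_le_hammingDist {ι α : Type*} [Fintype ι] [DecidableEq ι]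
    [Fintype α] [DecidableEq α] {d : ℕ} {C : Finset (ι → α)}
    (hC : ∀ x ∈ C, ∀ y ∈ C, x ≠ y → d ≤ hammingDist x y) :
    C.card ≤ sSup {M : ℕ | ∃ C : Finset (ι → α),
      (∀ x ∈ C, ∀ y ∈ C, x ≠ y → d ≤ hammingDist x y) ∧ C.card = M} :=
  le_csSup ⟨Fintype.card (ι → α), by rintro _ ⟨C', -, rfl⟩; exact C'.card_le_univ⟩ ⟨C, hC, rfl⟩

theorem sum_sub_eq_zero_of_natCast_sum_eq {ι : Type*} [Fintype ι] {q m : ℕ} {x y : ι → Fin q}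
    (hm : hammingDist x y * (q - 1) < m)
    (h : ∑ i, ((x i : ℕ) : ZMod m) = ∑ i, ((y i : ℕ) : ZMod m)) :
    ∑ i, (((x i : ℕ) : ℤ) - (y i : ℕ)) = 0 := by
  refine Int.eq_zero_of_abs_lt_dvd ((ZMod.intCast_zmod_eq_zero_iff_dvd _ m).mp ?_) ?_
  · simpa [sub_eq_zero] using h
  calc |∑ i, (((x i : ℕ) : ℤ) - (y i : ℕ))| ≤ hammingDist x y * ((q : ℤ) - 1) :=
        abs_sum_sub_le_hammingDist_mul x y
    _ ≤ hammingDist x y * ((q - 1 : ℕ) : ℤ) := by gcongr; omega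
    _ < m := by exact_mod_cast hm

section Syndrome

variable {ι : Type*} [Fintype ι] {q ℓ : ℕ}

-- `j : Fin r` stands for the exponent `j + 1`; the moment of order `0` is taken modulo `m`.
def syndrome (m r : ℕ) (a : ι → ZMod ℓ) (x : ι → Fin q) : ZMod m × (Fin r → ZMod ℓ) :=
  (∑ i, ((x i : ℕ) : ZMod m), fun j => ∑ i, ((x i : ℕ) : ZMod ℓ) * a i ^ ((j : ℕ) + 1))

theorem le_hammingDist_of_syndrome_eq (hℓ : ℓ.Prime) (hqℓ : q ≤ ℓ) {a : ι → ZMod ℓ}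
    (ha : Injective a) {m d : ℕ} (hm : (d - 1) * (q - 1) < m) {x y : ι → Fin q} (hxy : x ≠ y)
    (h : syndrome m (d - 2) a x = syndrome m (d - 2) a y) : d ≤ hammingDist x y := by
  have : Fact ℓ.Prime := ⟨hℓ⟩
  by_contra! hlt
  have hzsum : ∑ i, (((x i : ℕ) : ℤ) - (y i : ℕ)) = 0 :=
    sum_sub_eq_zero_of_natCast_sum_eq (lt_of_le_of_lt (Nat.mul_le_mul_right _ (by omega)) hm)
      (congrArg Prod.fst h)
  have hzℓ : (fun i => ((x i : ℕ) : ZMod ℓ) - (y i : ℕ)) = 0 := by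
    refine eq_zero_of_card_support_le_of_sum_mul_pow_eq_zero ha (k := d - 1) ?_ fun j hj => ?_
    · refine le_trans (Finset.card_le_card (Finset.monotone_filter_right _ ?_)) (by omega :
        hammingDist x y ≤ d - 1)
      intro i _ hzi hxyi
      exact hzi (by simp [hxyi])
    · cases j with
      | zero => simpa using congrArg (Int.cast : ℤ → ZMod ℓ) hzsum
      | succ j =>
        have hj : ∑ i, ((x i : ℕ) : ZMod ℓ) * a i ^ (j + 1) =
            ∑ i, ((y i : ℕ) : ZMod ℓ) * a i ^ (j + 1) :=
          congrFun (congrArg Prod.snd h) ⟨j, by omega⟩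
        simp [sub_mul, Finset.sum_sub_distrib, hj]
  exact hxy (funext fun i => Fin.injective_natCast_zmod hqℓ (sub_eq_zero.mp (congrFun hzℓ i)))

end Syndrome

theorem stmt_8_general (q n d ℓ : ℕ)
    (hℓ : ℓ.Prime) (hℓq : q ≤ ℓ) (hℓn : n ≤ ℓ) :
    (∃ C : Finset (Fin n → Fin q),
      (∀ x ∈ C, ∀ y ∈ C, x ≠ y → d ≤ hammingDist x y) ∧
      q ^ n ≤ ((d - 1) * (q - 1) + 1) * ℓ ^ (d - 2) * C.card) ∧
    (q : ℝ) ^ n / ((((d - 1) * (q - 1) + 1 : ℕ) : ℝ) * (ℓ : ℝ) ^ (d - 2)) ≤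
      ((sSup {M : ℕ | ∃ C : Finset (Fin n → Fin q),
        (∀ x ∈ C, ∀ y ∈ C, x ≠ y → d ≤ hammingDist x y) ∧ C.card = M} : ℕ) : ℝ) := by
  have : NeZero ℓ := ⟨hℓ.ne_zero⟩
  let m := (d - 1) * (q - 1) + 1
  let f := syndrome (q := q) m (d - 2) fun i : Fin n => ((i : ℕ) : ZMod ℓ)
  obtain ⟨b, hb⟩ := Fintype.exists_card_le_card_mul_card_fiber f
  let C : Finset (Fin n → Fin q) := {x | f x = b}
  have hC : ∀ x ∈ C, ∀ y ∈ C, x ≠ y → d ≤ hammingDist x y := fun x hx y hy hxy =>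
    le_hammingDist_of_syndrome_eq hℓ hℓq (Fin.injective_natCast_zmod hℓn) (by omega) hxy
      ((mem_filter.1 hx).2.trans (mem_filter.1 hy).2.symm)
  have hcard : q ^ n ≤ m * ℓ ^ (d - 2) * C.card := by
    simpa [Fintype.card_prod, ZMod.card] using hb
  refine ⟨⟨C, hC, hcard⟩, ?_⟩
  have hpos : (0 : ℝ) < ((m : ℕ) : ℝ) * (ℓ : ℝ) ^ (d - 2) :=
    mul_pos (by positivity) (pow_pos (by exact_mod_cast hℓ.pos) _)
  rw [div_le_iff₀ hpos]
  calc (q : ℝ) ^ n ≤ (m : ℝ) * ℓ ^ (d - 2) * C.card := by exact_mod_cast hcard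
    _ ≤ (m : ℝ) * ℓ ^ (d - 2) * _ := by
        gcongr
        exact_mod_cast card_le_sSup_card_of_le_hammingDist hC
    _ = _ := mul_comm _ _

/-- For `q ≥ 2`, `n ≥ 1`, `d ≥ 3` with `d − 1 ≤ n` and any prime
`ℓ ≥ max{q, n}`, there is a `q`-ary code of length `n` and minimum distance at least `d`
with `((d−1)(q−1)+1) · ℓ^{d−2} · |C| ≥ q^n`; in particular
`A_q(n, d) ≥ q^n / (((d−1)(q−1)+1) · ℓ^{d−2})`. -/
theorem stmt_8 (q n d ℓ : ℕ) (hq : 2 ≤ q) (hn : 1 ≤ n) (hd : 3 ≤ d) (hdn : d - 1 ≤ n)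
    (hℓ : ℓ.Prime) (hℓq : q ≤ ℓ) (hℓn : n ≤ ℓ) :
    (∃ C : Finset (Fin n → Fin q),
      (∀ x ∈ C, ∀ y ∈ C, x ≠ y → d ≤ hammingDist x y) ∧
      q ^ n ≤ ((d - 1) * (q - 1) + 1) * ℓ ^ (d - 2) * C.card) ∧
    (q : ℝ) ^ n / ((((d - 1) * (q - 1) + 1 : ℕ) : ℝ) * (ℓ : ℝ) ^ (d - 2)) ≤
      ((sSup {M : ℕ | ∃ C : Finset (Fin n → Fin q),
        (∀ x ∈ C, ∀ y ∈ C, x ≠ y → d ≤ hammingDist x y) ∧ C.card = M} : ℕ) : ℝ) :=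
  stmt_8_general q n d ℓ hℓ hℓq hℓn
end

section
/- For every integer n with 122 ≤ n ≤ 127 there exists a code C ⊆ {0, 1, 2}^n (alphabet size 3) with minimum Hamming distance at least 3 such that 5 · 127 · |C| ≥ 3^n; in particular |C| > 3^{n−6}, so r_3(n, 3) < 6 = r_3^L(n, 3). -/
/-!
Give the coordinates distinct weights `w i ∈ [1, 191]` and sort the words of `{0, 1, 2}^n` by
the checksum `∑ i, w i * x i` in `ZMod 635`. Two words with the same checksum that differ in one
or two coordinates would give `w i * d = 0` or `w i * d + w j * d' = 0` with `d, d' ∈ {±1, ±2}`.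
Since `635` is odd and `3 * 191 < 635`, such a congruence is an equation in `ℤ`, which forces one
weight to be twice another. The `127` numbers `m ≤ 191` with `⌊log₂ (191 / m)⌋` even contain no
such pair, so every fiber of the checksum has minimum distance `3`, and by pigeonhole one of them
has at least `3 ^ n / 635` words, more than `3 ^ (n - 6)` since `635 < 3 ^ 6`.
-/

open Finset

section Checksum

variable {ι α R : Type*} [Fintype ι] [DecidableEq α] [CommRing R]

def checksum (w : ι → R) (e : α → R) (x : ι → α) : R := ∑ i, w i * e (x i)

theorem checksum_sub_checksum (w : ι → R) (e : α → R) (x y : ι → α) :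
    checksum w e x - checksum w e y = ∑ i ∈ {i | x i ≠ y i}, w i * (e (x i) - e (y i)) := by
  rw [checksum, checksum, ← sum_sub_distrib, sum_filter_of_ne]
  · simp only [mul_sub]
  · intro i _ h hxy
    rw [hxy, sub_self, mul_zero] at h
    exact h rfl

theorem three_le_hammingDist_of_checksum_eq [DecidableEq ι] {w : ι → R} {e : α → R} {D : Set R}
    (hD : ∀ p q, p ≠ q → e p - e q ∈ D) (hw₁ : ∀ i, ∀ d ∈ D, w i * d ≠ 0)
    (hw₂ : Pairwise fun i j ↦ ∀ d ∈ D, ∀ d' ∈ D, w i * d + w j * d' ≠ 0)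
    {x y : ι → α} (hxy : x ≠ y) (h : checksum w e x = checksum w e y) :
    3 ≤ hammingDist x y := by
  have hsum := checksum_sub_checksum w e x y
  rw [h, sub_self] at hsum
  have hdist : hammingDist x y = #{i | x i ≠ y i} := rfl
  have hpos : 0 < hammingDist x y := hammingDist_pos.2 hxy
  by_contra! hlt
  obtain h1 | h2 : hammingDist x y = 1 ∨ hammingDist x y = 2 := by omega
  · rw [hdist] at h1
    obtain ⟨i, hi⟩ := card_eq_one.1 h1
    have hne : x i ≠ y i := by simpa using hi.ge (mem_singleton_self i)
    rw [hi, sum_singleton] at hsum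
    exact hw₁ i _ (hD _ _ hne) hsum.symm
  · rw [hdist] at h2
    obtain ⟨i, j, hij, hs⟩ := card_eq_two.1 h2
    have hi : x i ≠ y i := by simpa using hs.ge (by simp)
    have hj : x j ≠ y j := by simpa using hs.ge (by simp)
    rw [hs, sum_pair hij] at hsum
    exact hw₂ hij _ (hD _ _ hi) _ (hD _ _ hj) hsum.symm

end Checksum

theorem Fintype.exists_card_le_mul_card_fiber {α β : Type*} [Fintype α] [Fintype β] [Nonempty β]
    [DecidableEq β] (f : α → β) : ∃ y, card α ≤ card β * #{x | f x = y} := by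
  obtain ⟨y, hy⟩ := exists_le_card_fiber_of_nsmul_le_card f (b := (card α / card β : ℚ))
    (by rw [nsmul_eq_mul, mul_div_cancel₀ _ (by positivity)])
  refine ⟨y, ?_⟩
  rw [div_le_iff₀' (by positivity)] at hy
  exact_mod_cast hy

section DigitDiffs

def digitDiffs : Set ℤ := {-2, -1, 1, 2}

theorem natCast_sub_natCast_mem_digitDiffs {p q : Fin 3} (h : p ≠ q) :
    ((p : ℕ) : ℤ) - (q : ℕ) ∈ digitDiffs := by
  have := Fin.val_ne_of_ne h
  simp only [digitDiffs, Set.mem_insert_iff, Set.mem_singleton_iff]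
  omega

variable {M K u v : ℕ} {c c' : ℤ}

theorem eq_zero_of_dvd_mul_digitDiff (hK : 2 * K < M) (hu : u ≤ K) (hc : c ∈ digitDiffs)
    (h : (M : ℤ) ∣ u * c) : u = 0 := by
  have := Int.eq_zero_of_abs_lt_dvd h
    (by rcases hc with rfl | rfl | rfl | rfl <;> rw [abs_lt] <;> omega)
  rcases hc with rfl | rfl | rfl | rfl <;> omega

theorem doubling_of_dvd_mul_add_mul_digitDiffs (hM : Odd M) (hK : 3 * K < M) (hu : u ≤ K)
    (hv : v ≤ K) (hc : c ∈ digitDiffs) (hc' : c' ∈ digitDiffs) (h : (M : ℤ) ∣ u * c + v * c') :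
    u = v ∨ u = 2 * v ∨ v = 2 * u := by
  obtain ⟨k, hk⟩ := h
  obtain ⟨m, rfl⟩ := hM
  push_cast at hk
  -- `|u * c + v * c'| ≤ 4 * K < 2 * M` leaves `k ∈ {-1, 0, 1}`; `u * c + v * c' = ± M` is odd,
  -- so `c` or `c'` is `± 1`, and then `|u * c + v * c'| ≤ 3 * K < M`.
  rcases hc with rfl | rfl | rfl | rfl <;> rcases hc' with rfl | rfl | rfl | rfl <;>
  · have : -1 ≤ k ∧ k ≤ 1 := by constructor <;> nlinarith
    obtain rfl | rfl | rfl : k = -1 ∨ k = 0 ∨ k = 1 := by omega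
    all_goals omega

theorem natCast_mul_intCast_ne_zero (hK : 2 * K < M) (hu : u ∈ Icc 1 K) (hc : c ∈ digitDiffs) :
    (u : ZMod M) * c ≠ 0 := by
  intro h
  have hdvd : (M : ℤ) ∣ u * c := by
    rw [← ZMod.intCast_zmod_eq_zero_iff_dvd]
    push_cast
    exact h
  have := eq_zero_of_dvd_mul_digitDiff hK (mem_Icc.1 hu).2 hc hdvd
  simp_all

theorem natCast_mul_add_natCast_mul_ne_zero (hM : Odd M) (hK : 3 * K < M) (hu : u ≤ K)
    (hv : v ≤ K) (huv : u ≠ v) (hu2 : u ≠ 2 * v) (hv2 : v ≠ 2 * u) (hc : c ∈ digitDiffs)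
    (hc' : c' ∈ digitDiffs) : (u : ZMod M) * c + v * c' ≠ 0 := by
  intro h
  have hdvd : (M : ℤ) ∣ u * c + v * c' := by
    rw [← ZMod.intCast_zmod_eq_zero_iff_dvd]
    push_cast
    exact h
  rcases doubling_of_dvd_mul_add_mul_digitDiffs hM hK hu hv hc hc' hdvd with h | h | h <;>
    contradiction

theorem three_le_hammingDist_of_zmod_checksum_eq {ι : Type*} [Fintype ι] [DecidableEq ι]
    (hM : Odd M) (hK : 3 * K < M) {w : ι → ℕ} (hw : ∀ i, w i ∈ Icc 1 K)
    (hinj : Function.Injective w) (hdouble : ∀ i j, w j ≠ 2 * w i) {x y : ι → Fin 3}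
    (hxy : x ≠ y)
    (h : checksum (fun i ↦ (w i : ZMod M)) (fun p : Fin 3 ↦ ((p : ℕ) : ZMod M)) x =
      checksum (fun i ↦ (w i : ZMod M)) (fun p : Fin 3 ↦ ((p : ℕ) : ZMod M)) y) :
    3 ≤ hammingDist x y := by
  refine three_le_hammingDist_of_checksum_eq (D := Int.cast '' digitDiffs) ?_ ?_ ?_ hxy h
  · intro p q hpq
    exact ⟨_, natCast_sub_natCast_mem_digitDiffs hpq, by push_cast; rfl⟩
  · rintro i _ ⟨c, hc, rfl⟩
    exact natCast_mul_intCast_ne_zero (by omega) (hw i) hc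
  · rintro i j hij _ ⟨c, hc, rfl⟩ _ ⟨c', hc', rfl⟩
    exact natCast_mul_add_natCast_mul_ne_zero hM hK (mem_Icc.1 (hw i)).2 (mem_Icc.1 (hw j)).2
      (hinj.ne hij) (hdouble j i) (hdouble i j) hc hc'

end DigitDiffs

/-- The union of the blocks `(K / 2 ^ (2 * j + 1), K / 2 ^ (2 * j)]`. -/
def evenDyadicBlocks (K : ℕ) : Finset ℕ := {m ∈ Icc 1 K | Even (Nat.log 2 (K / m))}

theorem card_evenDyadicBlocks_191 : #(evenDyadicBlocks 191) = 127 := by rfl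

theorem two_mul_notMem_evenDyadicBlocks {K m : ℕ} (hm : m ∈ evenDyadicBlocks K) :
    2 * m ∉ evenDyadicBlocks K := by
  simp only [evenDyadicBlocks, mem_filter, mem_Icc] at hm ⊢
  rintro ⟨⟨-, h2m⟩, heven⟩
  have hdiv : K / (2 * m) = K / m / 2 := by rw [mul_comm, Nat.div_div_eq_div_mul]
  have hpos : 0 < Nat.log 2 (K / m) :=
    Nat.log_pos one_lt_two ((Nat.le_div_iff_mul_le (by omega)).2 (by omega))
  rw [hdiv, Nat.log_div_base, Nat.even_sub hpos] at heven
  simp_all [Nat.not_even_one]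

/-- For every `122 ≤ n ≤ 127` there is a `3`-ary code of length `n` with
minimum Hamming distance at least `3` such that `5 · 127 · |C| ≥ 3^n`; in particular
`|C| > 3^{n−6}` (so `r_3(n,3) < 6 = r_3^L(n,3)`). -/
theorem stmt_17 (n : ℕ) (h1 : 122 ≤ n) (h2 : n ≤ 127) :
    ∃ C : Finset (Fin n → Fin 3),
      (∀ x ∈ C, ∀ y ∈ C, x ≠ y → 3 ≤ hammingDist x y) ∧
      3 ^ n ≤ 5 * 127 * C.card ∧
      3 ^ (n - 6) < C.card := by
  obtain ⟨w⟩ : Nonempty (Fin n ↪ evenDyadicBlocks 191) :=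
    Function.Embedding.nonempty_of_card_le (by simpa [card_evenDyadicBlocks_191])
  set f := checksum (fun i ↦ ((w i : ℕ) : ZMod 635)) (fun p : Fin 3 ↦ ((p : ℕ) : ZMod 635))
  obtain ⟨c, hc⟩ := Fintype.exists_card_le_mul_card_fiber f
  have hC : 3 ^ n ≤ 635 * #{x | f x = c} := by simpa using hc
  refine ⟨({x | f x = c} : Finset _), fun x hx y hy hxy ↦ ?_, by omega, ?_⟩
  · refine three_le_hammingDist_of_zmod_checksum_eq (M := 635) (K := 191) (by decide)
      (by norm_num) (fun i ↦ (mem_filter.1 (w i).2).1) (Subtype.val_injective.comp w.injective)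
      (fun i j h ↦ ?_) hxy ((mem_filter.1 hx).2.trans (mem_filter.1 hy).2.symm)
    exact two_mul_notMem_evenDyadicBlocks (w i).2 (h ▸ (w j).2)
  · have h729 : 3 ^ n = 3 ^ (n - 6) * 729 := by
      rw [show 729 = 3 ^ 6 by rfl, ← pow_add, Nat.sub_add_cancel (by omega)]
    have : 0 < 3 ^ (n - 6) := by positivity
    omega
end

section
/- There exists a code C ⊆ {0, 1, …, 12}^17 (alphabet size 13, length 17) with minimum Hamming distance at least 5 such that |C| > 13^12; equivalently A_13(17, 5) > 13^12, so r_13(17, 5) < 5. -/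
/-!
The Reed–Solomon code of dimension 13 over `𝔽₁₇`, evaluated at all 17 points, has `17 ^ 13`
words at pairwise distance at least `17 - 13 + 1 = 5`. Fix a 13-element subset `S` of `𝔽₁₇`.
A word `c` lies in `S ^ 17` after translation by `v` for exactly `13 ^ 17` of the `17 ^ 17`
vectors `v`, so some translate of the code meets `S ^ 17` in at least
`17 ^ 13 · 13 ^ 17 / 17 ^ 17 > 13 ^ 12` words (as `17 ^ 4 < 13 ^ 5`). Translation and relabelling
`S` as `Fin 13` preserve Hamming distances.
-/

open Polynomial Finset

section ReedSolomon

variable {F ι : Type*} [Field F] [DecidableEq F] [Fintype ι]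

theorem card_lt_hammingDist_eval_add (α : ι ↪ F) {k : ℕ} {p q : F[X]}
    (hp : p ∈ degreeLT F k) (hq : q ∈ degreeLT F k) (hpq : p ≠ q) :
    Fintype.card ι < hammingDist (fun i => p.eval (α i)) (fun i => q.eval (α i)) + k := by
  set A : Finset ι := {i | p.eval (α i) = q.eval (α i)}
  have hsplit : #A + hammingDist (fun i => p.eval (α i)) (fun i => q.eval (α i)) =
      Fintype.card ι := card_filter_add_card_filter_not _
  suffices #A < k by omega
  by_contra! hk
  refine hpq (eq_of_degree_sub_lt_of_eval_index_eq A α.injective.injOn ?_ fun i hi => ?_)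
  · exact (mem_degreeLT.mp (sub_mem hp hq)).trans_le (by exact_mod_cast hk)
  · exact (mem_filter.mp hi).2

variable [Fintype F]

noncomputable def reedSolomon (α : ι ↪ F) (k : ℕ) : Finset (ι → F) :=
  univ.image fun m : Fin k → F => fun i => ((degreeLTEquiv F k).symm m : F[X]).eval (α i)

theorem reedSolomon_pairwise (α : ι ↪ F) (k : ℕ) :
    (reedSolomon α k : Set (ι → F)).Pairwise
      fun x y => Fintype.card ι < hammingDist x y + k := by
  simp only [reedSolomon, coe_image, coe_univ, Set.image_univ]
  rintro _ ⟨m, rfl⟩ _ ⟨m', rfl⟩ hne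
  refine card_lt_hammingDist_eval_add α (Submodule.coe_mem _) (Submodule.coe_mem _) ?_
  intro h
  exact hne (by simp only [h])

theorem card_reedSolomon (α : ι ↪ F) {k : ℕ} (hk : k ≤ Fintype.card ι) :
    #(reedSolomon α k) = Fintype.card F ^ k := by
  rw [reedSolomon, card_image_of_injective, card_univ, Fintype.card_fun, Fintype.card_fin]
  intro m m' h
  by_contra hne
  have := card_lt_hammingDist_eval_add α (Submodule.coe_mem _) (Submodule.coe_mem _)
    fun h' => hne ((degreeLTEquiv F k).symm.injective (Subtype.ext h'))
  simp only at h
  rw [h, hammingDist_self] at this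
  omega

end ReedSolomon

theorem exists_card_mul_le_card_filter_add_mem {H X : Type*} [AddGroup H] [Fintype H]
    [DecidableEq H] [Fintype X] (φ : X → H) (C : Finset H) :
    ∃ v : H, #C * Fintype.card X ≤ #{x | φ x + v ∈ C} * Fintype.card H := by
  have hfiber : ∀ x, #{v | φ x + v ∈ C} = #C := fun x => by
    have : ({v | φ x + v ∈ C} : Finset H) = C.map (Equiv.addLeft (φ x)).symm.toEmbedding := by
      ext v; simp [Finset.mem_map_equiv]
    rw [this, card_map]
  have hsum : ∑ v : H, #{x | φ x + v ∈ C} = Fintype.card X * #C := by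
    simp only [card_filter]
    rw [sum_comm]
    simp only [← card_filter, hfiber, sum_const, card_univ, smul_eq_mul]
  obtain ⟨v, -, hv⟩ := exists_le_of_sum_le (f := fun _ => #C * Fintype.card X)
    (g := fun v => #{x | φ x + v ∈ C} * Fintype.card H) univ_nonempty (by
      simp only [sum_const, card_univ, smul_eq_mul, ← sum_mul, hsum]; exact le_of_eq (by ring))
  exact ⟨v, hv⟩

theorem pairwise_le_hammingDist_preimage_embedding_add {ι G β : Type*} [Fintype ι]
    [AddGroup G] [DecidableEq G] [DecidableEq β] (e : β ↪ G) (v : ι → G)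
    {C : Set (ι → G)} {d : ℕ} (hC : C.Pairwise fun x y => d ≤ hammingDist x y) :
    {x : ι → β | (fun i => e (x i)) + v ∈ C}.Pairwise fun x y => d ≤ hammingDist x y := by
  intro x hx y hy hxy
  have hne : (fun i => e (x i)) + v ≠ (fun i => e (y i)) + v := fun h =>
    hxy (funext fun i => e.injective (add_right_cancel (congrFun h i)))
  calc d ≤ hammingDist ((fun i => e (x i)) + v) ((fun i => e (y i)) + v) := hC hx hy hne
    _ = hammingDist x y :=
      hammingDist_comp (fun i a => e a + v i) fun i => (add_left_injective (v i)).comp e.injective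

/-- There is a `13`-ary code of length `17` with minimum Hamming distance
at least `5` and more than `13^{12}` codewords; equivalently `A_13(17,5) > 13^{12}`,
so `r_13(17,5) < 5`. -/
theorem stmt_18 :
    ∃ C : Finset (Fin 17 → Fin 13),
      (∀ x ∈ C, ∀ y ∈ C, x ≠ y → 5 ≤ hammingDist x y) ∧
      13 ^ 12 < C.card := by
  have : Fact (Nat.Prime 17) := ⟨by norm_num⟩
  obtain ⟨α⟩ : Nonempty (Fin 17 ↪ ZMod 17) := Function.Embedding.nonempty_of_card_le (by simp)
  obtain ⟨e⟩ : Nonempty (Fin 13 ↪ ZMod 17) := Function.Embedding.nonempty_of_card_le (by simp)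
  set C := reedSolomon α 13
  have hC : (C : Set (Fin 17 → ZMod 17)).Pairwise fun x y => 5 ≤ hammingDist x y :=
    (reedSolomon_pairwise α 13).mono' fun x y h => by rw [Fintype.card_fin] at h; omega
  obtain ⟨v, hv⟩ :=
    exists_card_mul_le_card_filter_add_mem (fun x : Fin 17 → Fin 13 => fun i => e (x i)) C
  refine ⟨({x | (fun i => e (x i)) + v ∈ C} : Finset (Fin 17 → Fin 13)), fun x hx y hy =>
    pairwise_le_hammingDist_preimage_embedding_add e v hC (by simpa using hx) (by simpa using hy),
    ?_⟩
  rw [card_reedSolomon α (by simp)] at hv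
  simp only [ZMod.card, Fintype.card_fun, Fintype.card_fin] at hv
  omega
end
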